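/- arXiv:1607.08195 — 5 statements merged into one kernel-verified Lean document; each statement's English description precedes it below -/
import Mathlib

section
/- Every maximal independent (pairwise non-adjacent) subfamily of ℐ(s) equals ℐ(s,ε) for some ε ∈ {0,1}^s. -/
def AdjN (p q : ℕ × ℕ) : Prop :=
  ∃ x : ℝ, Set.Icc (p.1 : ℝ) p.2 ∩ Set.Icc (q.1 : ℝ) q.2 = {x}

/-- Membership in ℐ(s) = {[0,1],[s,s+1]} ∪ {[i,j] : 1 ≤ i < j ≤ s}. -/
def memIs (s : ℕ) (p : ℕ × ℕ) : Prop :=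
  p = (0, 1) ∨ p = (s, s + 1) ∨ (1 ≤ p.1 ∧ p.1 < p.2 ∧ p.2 ≤ s)

def memIsε (s : ℕ) (ε : ℕ → Bool) (p : ℕ × ℕ) : Prop :=
  (1 ≤ p.1 ∧ p.1 < p.2 ∧ p.2 ≤ s ∧ ε p.1 = false ∧ ε p.2 = true) ∨
  (p = (0, 1) ∧ ε 1 = true) ∨ (p = (s, s + 1) ∧ ε s = false)

/-!
Take ε_k = 1 exactly when some interval of M has right endpoint k. Two intervals of ℐ(s)
are adjacent iff one ends where the other begins, so independence of M says that no interval
of M begins at a right endpoint of M; this gives M ⊆ ℐ(s,ε). Conversely, an interval of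
ℐ(s,ε) other than [0,1] begins at no right endpoint of M and ends at no left endpoint of M
(for [s,s+1] because nothing in ℐ(s) begins at s+1), so it can be added to M and by
maximality already lies in M; and [0,1] is the only interval of ℐ(s) ending at 1.
-/

open Set

theorem exists_Icc_inter_Icc_eq_singleton_iff {α : Type*} [LinearOrder α] {a b c d : α} :
    (∃ x, Icc a b ∩ Icc c d = {x}) ↔ max a c = min b d := by
  simp only [Icc_inter_Icc, Icc_eq_singleton_iff]
  constructor
  · rintro ⟨x, hmax, hmin⟩
    rw [hmax, hmin]
  · intro h
    exact ⟨_, h, rfl⟩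

theorem adjN_iff {p q : ℕ × ℕ} (hp : p.1 < p.2) (hq : q.1 < q.2) :
    AdjN p q ↔ p.2 = q.1 ∨ q.2 = p.1 := by
  rw [AdjN, exists_Icc_inter_Icc_eq_singleton_iff, ← Nat.cast_max, ← Nat.cast_min, Nat.cast_inj]
  omega

theorem memIs.fst_lt_snd {s : ℕ} {p : ℕ × ℕ} (hp : memIs s p) : p.1 < p.2 := by
  rcases hp with rfl | rfl | h
  exacts [Nat.one_pos, Nat.lt_succ_self s, h.2.1]

def IsIndepFamily (s : ℕ) (M : Set (ℕ × ℕ)) : Prop :=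
  (∀ p ∈ M, memIs s p) ∧ ∀ p ∈ M, ∀ q ∈ M, ¬ AdjN p q

open Classical in
noncomputable def rightEnds (M : Set (ℕ × ℕ)) (k : ℕ) : Bool :=
  decide (∃ p ∈ M, p.2 = k)

namespace IsIndepFamily

variable {s : ℕ} {M : Set (ℕ × ℕ)} {p : ℕ × ℕ}

theorem snd_ne_fst (hM : IsIndepFamily s M) {q : ℕ × ℕ} (hp : p ∈ M) (hq : q ∈ M) :
    p.2 ≠ q.1 := fun h =>
  hM.2 p hp q hq ((adjN_iff (hM.1 p hp).fst_lt_snd (hM.1 q hq).fst_lt_snd).2 (Or.inl h))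

theorem memIsε_rightEnds (hM : IsIndepFamily s M) (hp : p ∈ M) :
    memIsε s (rightEnds M) p := by
  simp only [memIsε, rightEnds, decide_eq_true_iff, decide_eq_false_iff_not]
  have hnot_end : ¬ ∃ q ∈ M, q.2 = p.1 := fun ⟨q, hq, h⟩ => hM.snd_ne_fst hq hp h
  rcases hM.1 p hp with rfl | rfl | ⟨h1, h12, h2⟩
  · exact Or.inr (Or.inl ⟨rfl, _, hp, rfl⟩)
  · exact Or.inr (Or.inr ⟨rfl, hnot_end⟩)
  · exact Or.inl ⟨h1, h12, h2, hnot_end, _, hp, rfl⟩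

end IsIndepFamily

theorem isIndepFamily_insert {s : ℕ} {M : Set (ℕ × ℕ)} {p : ℕ × ℕ}
    (hM : IsIndepFamily s M) (hp : memIs s p) (hfst : ∀ q ∈ M, q.2 ≠ p.1)
    (hsnd : ∀ q ∈ M, q.1 ≠ p.2) : IsIndepFamily s (insert p M) := by
  have hmem : ∀ q ∈ insert p M, memIs s q := by
    rintro q (rfl | hq)
    exacts [hp, hM.1 q hq]
  refine ⟨hmem, fun q hq r hr hadj => ?_⟩
  rw [adjN_iff (hmem q hq).fst_lt_snd (hmem r hr).fst_lt_snd] at hadj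
  have hlt := hp.fst_lt_snd
  rcases hq with rfl | hq <;> rcases hr with rfl | hr
  · omega
  · exact hadj.elim (fun h => hsnd r hr h.symm) (hfst r hr)
  · exact hadj.elim (hfst q hq) (fun h => hsnd q hq h.symm)
  · exact hadj.elim (hM.snd_ne_fst hq hr) (hM.snd_ne_fst hr hq)

namespace Maximal

variable {s : ℕ} {M : Set (ℕ × ℕ)} {p : ℕ × ℕ}

theorem mem_of_memIs (hM : Maximal (IsIndepFamily s) M) (hp : memIs s p)
    (hfst : ∀ q ∈ M, q.2 ≠ p.1) (hsnd : ∀ q ∈ M, q.1 ≠ p.2) : p ∈ M :=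
  hM.2 (isIndepFamily_insert hM.1 hp hfst hsnd) (subset_insert p M) (mem_insert p M)

theorem mem_of_memIsε_rightEnds (hs : 1 ≤ s) (hM : Maximal (IsIndepFamily s) M)
    (hp : memIsε s (rightEnds M) p) : p ∈ M := by
  simp only [memIsε, rightEnds, decide_eq_true_iff, decide_eq_false_iff_not] at hp
  rcases hp with ⟨h1, h12, h2, hnot_end, r, hr, hr2⟩ | ⟨rfl, q, hq, hq1⟩ | ⟨rfl, hnot_end⟩
  · refine hM.mem_of_memIs (Or.inr (Or.inr ⟨h1, h12, h2⟩)) (fun q hq h => hnot_end ⟨q, hq, h⟩)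
      fun q hq h => hM.1.snd_ne_fst hr hq (hr2.trans h.symm)
  · obtain rfl : q = (0, 1) := by
      rcases hM.1.1 q hq with h | rfl | h
      exacts [h, by omega, by omega]
    exact hq
  · refine hM.mem_of_memIs (Or.inr (Or.inl rfl)) (fun q hq h => hnot_end ⟨q, hq, h⟩)
      fun q hq h => ?_
    rcases hM.1.1 q hq with rfl | rfl | h' <;> simp only at h <;> omega

end Maximal

/-- Every maximal independent subfamily of ℐ(s) equals ℐ(s,ε) for some ε ∈ {0,1}^s. -/
theorem stmt_4 (s : ℕ) (hs : 1 ≤ s) (M : Set (ℕ × ℕ))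
    (hsub : ∀ p ∈ M, memIs s p)
    (hind : ∀ p ∈ M, ∀ q ∈ M, ¬ AdjN p q)
    (hmax : ∀ M' : Set (ℕ × ℕ), M ⊆ M' → (∀ p ∈ M', memIs s p) →
      (∀ p ∈ M', ∀ q ∈ M', ¬ AdjN p q) → M' = M) :
    ∃ ε : ℕ → Bool, M = {p | memIsε s ε p} := by
  have hM : Maximal (IsIndepFamily s) M :=
    ⟨⟨hsub, hind⟩, fun M' hM' hle => (hmax M' hle hM'.1 hM'.2).le⟩
  exact ⟨rightEnds M, Set.ext fun _ =>
    ⟨hM.1.memIsε_rightEnds, hM.mem_of_memIsε_rightEnds hs⟩⟩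
end

section
/- Let G₁, G₂ be graphs and G = G₁ * G₂ their disjunctive product. If C is a finite clique in G, and γ_i denotes the multiset of i-th coordinates of elements of C, then the independence number of (the multigraph expansion of) γ₁ is at most the clique number of γ₂. -/
/-!
Lift the independent multiset `t` to a subset `D` of the clique `C`. Two distinct elements of
`D` have non-adjacent first coordinates, so their second coordinates must be adjacent in `G₂`;
in particular they differ, and `Prod.snd` maps `D` injectively onto a clique of `G₂`.
-/

theorem Multiset.exists_le_and_map_eq_of_le_map {α β : Type*} {f : α → β} {s : Multiset α}
    {t : Multiset β} (h : t ≤ s.map f) : ∃ u ≤ s, u.map f = t := by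
  induction s using Quotient.inductionOn with | _ ls =>
  induction t using Quotient.inductionOn with | _ lt =>
  obtain ⟨l, hperm, hsub⟩ : lt.Subperm (ls.map f) := h
  obtain ⟨l', hl', rfl⟩ := List.sublist_map_iff.mp hsub
  exact ⟨l', hl'.subperm, Quotient.sound hperm⟩

theorem Finset.exists_subset_and_map_eq_of_le_map {α β : Type*} {f : α → β} {s : Finset α}
    {t : Multiset β} (h : t ≤ s.val.map f) : ∃ u ⊆ s, u.val.map f = t := by
  obtain ⟨u, hus, rfl⟩ := Multiset.exists_le_and_map_eq_of_le_map h
  exact ⟨⟨u, Multiset.nodup_of_le hus s.nodup⟩, Multiset.subset_of_le hus, rfl⟩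

section DisjunctiveProduct

variable {V₁ V₂ : Type*} {G₁ : SimpleGraph V₁} {G₂ : SimpleGraph V₂} {S : Set (V₁ × V₂)}

theorem injOn_snd_and_isClique_image_snd
    (hS : S.Pairwise fun u v => G₁.Adj u.1 v.1 ∨ G₂.Adj u.2 v.2)
    (hind : S.Pairwise fun u v => ¬ G₁.Adj u.1 v.1) :
    S.InjOn Prod.snd ∧ G₂.IsClique (Prod.snd '' S) := by
  have hadj : S.Pairwise fun u v => G₂.Adj u.2 v.2 :=
    hS.imp_on fun u hu v hv huv h => h.resolve_left (hind hu hv huv)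
  have hinj : S.InjOn Prod.snd :=
    Set.injOn_iff_pairwise_ne.mpr (hadj.mono' fun _ _ h => h.ne)
  exact ⟨hinj, (hinj.pairwise_image).mpr hadj⟩

end DisjunctiveProduct

/-- Let C be a finite clique in the disjunctive product G₁ * G₂.  If t is an
independent sub-multiset of the multiset γ₁ of first coordinates of C (in the
multigraph expansion, where copies of the same vertex are non-adjacent), then its
size is at most the size of some clique of G₂ inside the support of the multiset γ₂
of second coordinates; i.e. α(γ₁) ≤ ω(γ₂). -/
theorem stmt_7 {V₁ V₂ : Type*} (G₁ : SimpleGraph V₁) (G₂ : SimpleGraph V₂)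
    (C : Finset (V₁ × V₂))
    (hC : ∀ u ∈ C, ∀ v ∈ C, u ≠ v → G₁.Adj u.1 v.1 ∨ G₂.Adj u.2 v.2)
    (t : Multiset V₁) (ht : t ≤ Multiset.map Prod.fst C.val)
    (hind : ∀ x ∈ t, ∀ y ∈ t, ¬ G₁.Adj x y) :
    ∃ s : Finset V₂, G₂.IsClique ↑s ∧
      (∀ y ∈ s, y ∈ Multiset.map Prod.snd C.val) ∧
      Multiset.card t ≤ s.card := by
  classical
  obtain ⟨D, hDC, rfl⟩ := Finset.exists_subset_and_map_eq_of_le_map ht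
  have hfst : ∀ u ∈ D, u.1 ∈ D.val.map Prod.fst := fun u hu => Multiset.mem_map_of_mem _ hu
  obtain ⟨hinj, hclique⟩ := injOn_snd_and_isClique_image_snd (S := ↑D)
    (fun u hu v hv => hC u (hDC hu) v (hDC hv))
    (fun u hu v hv _ => hind _ (hfst u hu) _ (hfst v hv))
  refine ⟨D.image Prod.snd, by rwa [Finset.coe_image], fun y hy => ?_, ?_⟩
  · obtain ⟨u, hu, rfl⟩ := Finset.mem_image.mp hy
    exact Multiset.mem_map_of_mem _ (hDC hu)
  · rw [Multiset.card_map, Finset.card_image_of_injOn hinj, Finset.card_def]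
end

section
/- For any finite nonempty family 𝒢 of closed intervals of positive length in ℝ, there exist an integer s ≥ 0 and a graph homomorphism f : 𝒢 → ℐ(s) (with respect to the one-point-intersection adjacency). -/
/-! Two intervals of positive length meet in a single point exactly when the right end of one is
the left end of the other. Replacing every endpoint of the family by its rank among all endpoints
(shifted by one) is strictly monotone, so it keeps positive lengths and shared endpoints, and sends
every interval to some `[i, j]` with `1 ≤ i < j ≤ s`, where `s` is the number of endpoints. -/

def AdjI (I J : ℝ × ℝ) : Prop :=
  ∃ x : ℝ, Set.Icc I.1 I.2 ∩ Set.Icc J.1 J.2 = {x}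

open Finset

lemma Set.eq_or_eq_of_Icc_inter_Icc_eq_singleton {α : Type*} [LinearOrder α] {a b c d x : α}
    (hab : a < b) (hcd : c < d) (h : Set.Icc a b ∩ Set.Icc c d = {x}) : b = c ∨ d = a := by
  rw [Set.Icc_inter_Icc, Set.Icc_eq_singleton_iff] at h
  grind

lemma adjN_of_le {i j k : ℕ} (hij : i ≤ j) (hjk : j ≤ k) : AdjN (i, j) (j, k) :=
  ⟨j, Set.Icc_inter_Icc_eq_singleton (by exact_mod_cast hij) (by exact_mod_cast hjk)⟩

lemma AdjN.symm {p q : ℕ × ℕ} (h : AdjN p q) : AdjN q p := by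
  obtain ⟨x, hx⟩ := h
  exact ⟨x, Set.inter_comm _ _ ▸ hx⟩

namespace Finset

variable {α : Type*} [Preorder α] [DecidableLT α] (E : Finset α)

def rank (x : α) : ℕ := #{y ∈ E | y < x} + 1

variable {E}

lemma rank_lt_rank {x y : α} (hx : x ∈ E) (hxy : x < y) : E.rank x < E.rank y := by
  have hsub : {z ∈ E | z < x} ⊂ {z ∈ E | z < y} := by
    refine ssubset_iff_of_subset (monotone_filter_right _ fun _ _ hz => hz.trans hxy)
      |>.mpr ⟨x, by simp [hx, hxy]⟩
  exact Nat.succ_lt_succ (card_lt_card hsub)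

lemma rank_le_card {x : α} (hx : x ∈ E) : E.rank x ≤ #E := by
  have hsub : {z ∈ E | z < x} ⊂ E := filter_ssubset.mpr ⟨x, hx, lt_irrefl x⟩
  exact card_lt_card hsub

end Finset

theorem stmt_8_general (G : Finset (ℝ × ℝ)) (hpos : ∀ I ∈ G, I.1 < I.2) :
    ∃ (s : ℕ) (f : ℝ × ℝ → ℕ × ℕ),
      (∀ I ∈ G, memIs s (f I)) ∧
      (∀ I ∈ G, ∀ J ∈ G, AdjI I J → AdjN (f I) (f J)) := by
  classical
  set E : Finset ℝ := G.image Prod.fst ∪ G.image Prod.snd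
  have hfst : ∀ I ∈ G, I.1 ∈ E := fun I hI => mem_union_left _ (mem_image_of_mem _ hI)
  have hsnd : ∀ I ∈ G, I.2 ∈ E := fun I hI => mem_union_right _ (mem_image_of_mem _ hI)
  have hlen : ∀ I ∈ G, E.rank I.1 < E.rank I.2 := fun I hI => rank_lt_rank (hfst I hI) (hpos I hI)
  refine ⟨#E, fun I => (E.rank I.1, E.rank I.2), fun I hI => ?_, fun I hI J hJ ⟨x, hx⟩ => ?_⟩
  · exact Or.inr <| Or.inr ⟨Nat.le_add_left _ _, hlen I hI, rank_le_card (hsnd I hI)⟩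
  show AdjN (E.rank I.1, E.rank I.2) (E.rank J.1, E.rank J.2)
  rcases Set.eq_or_eq_of_Icc_inter_Icc_eq_singleton (hpos I hI) (hpos J hJ) hx with h | h
  · rw [← h]
    exact adjN_of_le (hlen I hI).le (h ▸ hlen J hJ).le
  · rw [← h]
    exact (adjN_of_le (hlen J hJ).le (h ▸ hlen I hI).le).symm

/-- Every finite nonempty family of closed intervals of positive length admits a graph
homomorphism into some ℐ(s). -/
theorem stmt_8 (G : Finset (ℝ × ℝ)) (hne : G.Nonempty) (hpos : ∀ I ∈ G, I.1 < I.2) :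
    ∃ (s : ℕ) (f : ℝ × ℝ → ℕ × ℕ),
      (∀ I ∈ G, memIs s (f I)) ∧
      (∀ I ∈ G, ∀ J ∈ G, AdjI I J → AdjN (f I) (f J)) :=
  stmt_8_general G hpos
end

section
/- Let γ be a formal ℕ-combination of closed intervals in ℝ with independence number α(γ) > 1 (with respect to one-point-intersection adjacency). Then the total multiplicity satisfies |γ| ≤ 4α(γ) − 3. -/
open Finset

theorem Multiset.countP_eq_sum_map_ite {α : Type*} (p : α → Prop) [DecidablePred p]
    (m : Multiset α) : m.countP p = (m.map fun a => if p a then 1 else 0).sum := by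
  induction m using Multiset.induction_on with
  | empty => simp
  | cons a m ih => simp [Multiset.countP_cons, ih, add_comm]

section DirectedCut

variable {V : Type*} [DecidableEq V]

def dicut (γ : Multiset (V × V)) (A : Finset V) : Multiset (V × V) :=
  γ.filter fun e => e.2 ∈ A ∧ e.1 ∉ A

theorem card_dicut_eq_sum (γ : Multiset (V × V)) (A : Finset V) :
    Multiset.card (dicut γ A) = (γ.map fun e => if e.2 ∈ A ∧ e.1 ∉ A then 1 else 0).sum := by
  rw [dicut, ← Multiset.countP_eq_card_filter, Multiset.countP_eq_sum_map_ite]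

theorem card_dicut_insert_insert_add (γ : Multiset (V × V)) {X : Finset V} {u w : V}
    (hu : u ∉ X) (hw : w ∉ X) (huw : u ≠ w) :
    Multiset.card (dicut γ (insert u (insert w X))) + Multiset.card (dicut γ X)
        + γ.countP (fun e => e = (u, w) ∨ e = (w, u)) =
      Multiset.card (dicut γ (insert u X)) + Multiset.card (dicut γ (insert w X)) := by
  simp only [card_dicut_eq_sum, Multiset.countP_eq_sum_map_ite, ← Multiset.sum_map_add]
  congr 1
  refine Multiset.map_congr rfl fun ⟨a, b⟩ _ => ?_
  by_cases hau : a = u <;> by_cases haw : a = w <;> by_cases hbu : b = u <;>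
    by_cases hbw : b = w <;> by_cases haX : a ∈ X <;> by_cases hbX : b ∈ X <;>
    simp_all

/-- `4 ×` the probability that the edge `e` enters `insert t A` for a uniformly random `A ⊆ T`,
when `s` is a source and `t` a sink outside `T`. -/
def weight (s t : V) (e : V × V) : ℕ := (if e.1 = s then 2 else 1) * (if e.2 = t then 2 else 1)

theorem card_filter_powerset_of_iff {T P Q : Finset V} {p : Finset V → Prop} [DecidablePred p]
    (hPQ : P ⊆ Q) (hQT : Q ⊆ T) (h : ∀ A ⊆ T, p A ↔ P ⊆ A ∧ A ⊆ Q) :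
    #{A ∈ T.powerset | p A} = 2 ^ (#Q - #P) := by
  rw [← card_Icc_finset hPQ]
  congr 1
  ext A
  simp only [mem_filter, mem_powerset, mem_Icc]
  exact ⟨fun ⟨hA, hpA⟩ => (h A hA).1 hpA, fun hA => ⟨hA.2.trans hQT, (h A (hA.2.trans hQT)).2 hA⟩⟩

theorem four_mul_card_filter_powerset {T : Finset V} {s t a b : V} (hsT : s ∉ T) (htT : t ∉ T)
    (hst : s ≠ t) (ha : a ∈ insert s T) (hb : b ∈ insert t T) (hab : a ≠ b) :
    4 * #{A ∈ T.powerset | b ∈ insert t A ∧ a ∉ insert t A} = 2 ^ #T * weight s t (a, b) := by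
  have hsA : ∀ A ⊆ T, s ∉ A := fun A hA h => hsT (hA h)
  rcases (mem_insert.1 ha).imp_left Eq.symm with rfl | haT <;>
    rcases (mem_insert.1 hb).imp_left Eq.symm with rfl | hbT
  · rw [card_filter_powerset_of_iff (empty_subset T) subset_rfl
      fun A hA => by simp [hst, hsA A hA, hA]]
    simp [weight, mul_comm]
  · have hbt : b ≠ t := ne_of_mem_of_not_mem hbT htT
    rw [card_filter_powerset_of_iff (singleton_subset_iff.2 hbT) subset_rfl
      fun A hA => by simp [hst, hsA A hA, hA, hbt]]
    obtain ⟨k, hk⟩ := Nat.exists_eq_add_one_of_ne_zero (card_ne_zero_of_mem hbT)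
    simp only [hk, card_singleton, add_tsub_cancel_right, pow_succ, weight, if_pos, hbt,
      if_false, mul_one]
    ring
  · have hat : a ≠ t := ne_of_mem_of_not_mem haT htT
    rw [card_filter_powerset_of_iff (empty_subset _) (erase_subset a T)
      fun A hA => by simp [hat, hA, subset_erase]]
    obtain ⟨k, hk⟩ := Nat.exists_eq_add_one_of_ne_zero (card_ne_zero_of_mem haT)
    simp only [card_erase_of_mem haT, hk, add_tsub_cancel_right, card_empty, tsub_zero, pow_succ,
      weight, ne_of_mem_of_not_mem haT hsT, if_pos, if_false, one_mul]
    ring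
  · have hat : a ≠ t := ne_of_mem_of_not_mem haT htT
    have hbt : b ≠ t := ne_of_mem_of_not_mem hbT htT
    rw [card_filter_powerset_of_iff (singleton_subset_iff.2 (mem_erase.2 ⟨hab.symm, hbT⟩))
      (erase_subset a T) fun A hA => by simp [hat, hbt, hA, subset_erase]]
    obtain ⟨k, hk⟩ : ∃ k, #T = k + 2 :=
      ⟨#T - 2, by have := one_lt_card.2 ⟨a, haT, b, hbT, hab⟩; omega⟩
    simp only [card_erase_of_mem haT, hk, Nat.add_one_sub_one, card_singleton, add_tsub_cancel_right,
      pow_succ, weight, ne_of_mem_of_not_mem haT hsT, hbt, if_false, mul_one]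
    ring

variable {γ : Multiset (V × V)} {T : Finset V} {s t : V}

theorem sum_four_mul_card_dicut_insert (hsT : s ∉ T) (htT : t ∉ T) (hst : s ≠ t)
    (hedge : ∀ e ∈ γ, e.1 ∈ insert s T ∧ e.2 ∈ insert t T ∧ e.1 ≠ e.2) :
    ∑ A ∈ T.powerset, 4 * Multiset.card (dicut γ (insert t A)) =
      2 ^ #T * (γ.map (weight s t)).sum := by
  calc ∑ A ∈ T.powerset, 4 * Multiset.card (dicut γ (insert t A))
      = (γ.map fun e => 4 * #{A ∈ T.powerset | e.2 ∈ insert t A ∧ e.1 ∉ insert t A}).sum := by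
        simp only [card_dicut_eq_sum, card_filter, Multiset.sum_map_mul_left,
          Multiset.sum_map_sum, mul_sum]
    _ = (γ.map fun e => 2 ^ #T * weight s t e).sum := by
        refine congrArg _ (Multiset.map_congr rfl fun e he => ?_)
        obtain ⟨ha, hb, hab⟩ := hedge e he
        exact four_mul_card_filter_powerset hsT htT hst ha hb hab
    _ = 2 ^ #T * (γ.map (weight s t)).sum := Multiset.sum_map_mul_left

theorem sum_weight_le_four_mul (hsT : s ∉ T) (htT : t ∉ T) (hst : s ≠ t)
    (hedge : ∀ e ∈ γ, e.1 ∈ insert s T ∧ e.2 ∈ insert t T ∧ e.1 ≠ e.2) {α : ℕ}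
    (hmax : ∀ A ⊆ T, Multiset.card (dicut γ (insert t A)) ≤ α) :
    (γ.map (weight s t)).sum ≤ 4 * α := by
  refine Nat.le_of_mul_le_mul_left ?_ (Nat.two_pow_pos #T)
  rw [← sum_four_mul_card_dicut_insert hsT htT hst hedge, ← card_powerset, ← smul_eq_mul,
    ← sum_const]
  exact sum_le_sum fun A hA => by have := hmax A (mem_powerset.1 hA); omega

theorem card_dicut_insert_eq_of_sum_weight_eq (hsT : s ∉ T) (htT : t ∉ T) (hst : s ≠ t)
    (hedge : ∀ e ∈ γ, e.1 ∈ insert s T ∧ e.2 ∈ insert t T ∧ e.1 ≠ e.2) {α : ℕ}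
    (hmax : ∀ A ⊆ T, Multiset.card (dicut γ (insert t A)) ≤ α)
    (hsum : (γ.map (weight s t)).sum = 4 * α) {A : Finset V} (hA : A ⊆ T) :
    Multiset.card (dicut γ (insert t A)) = α := by
  have hle : ∀ B ∈ T.powerset, 4 * Multiset.card (dicut γ (insert t B)) ≤ 4 * α :=
    fun B hB => by have := hmax B (mem_powerset.1 hB); omega
  have heq : ∑ B ∈ T.powerset, 4 * Multiset.card (dicut γ (insert t B)) =
      ∑ _B ∈ T.powerset, 4 * α := by
    rw [sum_four_mul_card_dicut_insert hsT htT hst hedge, hsum, sum_const, card_powerset,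
      smul_eq_mul]
  have := (sum_eq_sum_iff_of_le hle).1 heq A (mem_powerset.2 hA)
  omega

theorem card_add_two_le_sum_weight (hs : ∃ e ∈ γ, e.1 = s) (ht : ∃ e ∈ γ, e.2 = t) :
    Multiset.card γ + 2 ≤ (γ.map (weight s t)).sum := by
  have hs' := Multiset.countP_pos.2 hs
  have ht' := Multiset.countP_pos.2 ht
  calc Multiset.card γ + 2
      ≤ Multiset.card γ + γ.countP (fun e => e.1 = s) + γ.countP (fun e => e.2 = t) := by omega
    _ = (γ.map fun e => 1 + (if e.1 = s then 1 else 0) + (if e.2 = t then 1 else 0)).sum := by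
        simp [Multiset.sum_map_add, Multiset.countP_eq_sum_map_ite]
    _ ≤ (γ.map (weight s t)).sum :=
        Multiset.sum_map_le_sum_map _ _ fun e _ => by unfold weight; split_ifs <;> norm_num

theorem two_mul_card_le_sum_weight (h : ∀ e ∈ γ, e.1 = s ∨ e.2 = t) :
    2 * Multiset.card γ ≤ (γ.map (weight s t)).sum := by
  rw [mul_comm, ← smul_eq_mul, ← Multiset.card_map (weight s t)]
  refine Multiset.card_nsmul_le_sum fun w hw => ?_
  obtain ⟨e, he, rfl⟩ := Multiset.mem_map.1 hw
  unfold weight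
  rcases h e he with h | h <;> split_ifs <;> simp_all

theorem forall_fst_eq_or_snd_eq_of_card_dicut_eq (htT : t ∉ T)
    (hedge : ∀ e ∈ γ, e.1 ∈ insert s T ∧ e.2 ∈ insert t T ∧ e.1 ≠ e.2) {α : ℕ}
    (hcut : ∀ A ⊆ T, Multiset.card (dicut γ (insert t A)) = α) :
    ∀ e ∈ γ, e.1 = s ∨ e.2 = t := by
  have hcut' : ∀ B, t ∈ B → B ⊆ insert t T → Multiset.card (dicut γ B) = α := fun B htB hB => by
    rw [← insert_erase htB]
    exact hcut _ (by simpa [subset_insert_iff] using hB)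
  intro e he
  by_contra! hne
  obtain ⟨ha, hb, hab⟩ := hedge e he
  have haT := (mem_insert.1 ha).resolve_left hne.1
  have hbT := (mem_insert.1 hb).resolve_left hne.2
  have hmod := card_dicut_insert_insert_add γ (X := {t}) (u := e.1) (w := e.2)
    (by simpa using ne_of_mem_of_not_mem haT htT) (by simpa using ne_of_mem_of_not_mem hbT htT) hab
  rw [hcut' _ (by simp) (by simp [insert_subset_iff, *]), hcut' _ (by simp) (by simp [*]),
    hcut' _ (by simp) (by simp [insert_subset_iff, *]),
    hcut' _ (by simp) (by simp [insert_subset_iff, *])] at hmod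
  have hpos : 0 < γ.countP (fun x => x = (e.1, e.2) ∨ x = (e.2, e.1)) :=
    Multiset.countP_pos_of_mem he (Or.inl rfl)
  omega

theorem card_add_three_le_four_mul_of_source_sink (hsT : s ∉ T) (htT : t ∉ T) (hst : s ≠ t)
    (hedge : ∀ e ∈ γ, e.1 ∈ insert s T ∧ e.2 ∈ insert t T ∧ e.1 ≠ e.2)
    (hs : ∃ e ∈ γ, e.1 = s) (ht : ∃ e ∈ γ, e.2 = t) {α : ℕ}
    (hmax : ∀ A ⊆ T, Multiset.card (dicut γ (insert t A)) ≤ α) (hα : 2 ≤ α) :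
    Multiset.card γ + 3 ≤ 4 * α := by
  have hW := sum_weight_le_four_mul hsT htT hst hedge hmax
  have hW₂ := card_add_two_le_sum_weight hs ht
  by_contra! hlt
  have hend := forall_fst_eq_or_snd_eq_of_card_dicut_eq htT hedge fun A hA =>
    card_dicut_insert_eq_of_sum_weight_eq hsT htT hst hedge hmax (by omega) hA
  have := two_mul_card_le_sum_weight hend
  omega

end DirectedCut

theorem card_add_three_le_four_mul_of_lt {V : Type*} [LinearOrder V] {γ : Multiset (V × V)}
    (hlt : ∀ e ∈ γ, e.1 < e.2) {S : Finset V} (hS : ∀ e ∈ γ, e.1 ∈ S ∧ e.2 ∈ S) {α : ℕ}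
    (hmax : ∀ A ⊆ S, Multiset.card (dicut γ A) ≤ α) (hα : 2 ≤ α) :
    Multiset.card γ + 3 ≤ 4 * α := by
  obtain rfl | ⟨e₀, he₀⟩ := Multiset.empty_or_exists_mem γ
  · simp only [Multiset.card_zero]
    omega
  have mem_tails : ∀ e ∈ γ, e.1 ∈ (γ.map Prod.fst).toFinset := fun e he =>
    Multiset.mem_toFinset.2 (Multiset.mem_map_of_mem _ he)
  have mem_heads : ∀ e ∈ γ, e.2 ∈ (γ.map Prod.snd).toFinset := fun e he =>
    Multiset.mem_toFinset.2 (Multiset.mem_map_of_mem _ he)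
  set s := (γ.map Prod.fst).toFinset.min' ⟨_, mem_tails e₀ he₀⟩
  set t := (γ.map Prod.snd).toFinset.max' ⟨_, mem_heads e₀ he₀⟩
  have hsource : ∀ e ∈ γ, s < e.2 := fun e he =>
    (min'_le _ _ (mem_tails e he)).trans_lt (hlt e he)
  have hsink : ∀ e ∈ γ, e.1 < t := fun e he =>
    (hlt e he).trans_le (le_max' _ _ (mem_heads e he))
  have hs : ∃ e ∈ γ, e.1 = s := Multiset.mem_map.1 (Multiset.mem_toFinset.1 (min'_mem _ _))
  have ht : ∃ e ∈ γ, e.2 = t := Multiset.mem_map.1 (Multiset.mem_toFinset.1 (max'_mem _ _))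
  have hst : s ≠ t := by
    obtain ⟨e, he, hes⟩ := hs
    exact hes ▸ (hsink e he).ne
  refine card_add_three_le_four_mul_of_source_sink (T := (S.erase s).erase t)
    (by simp) (by simp) hst (fun e he => ?_) hs ht (fun A hA => hmax _ ?_) hα
  · have := hsource e he
    have := hsink e he
    have := hS e he
    refine ⟨?_, ?_, (hlt e he).ne⟩ <;>
      simp [mem_erase, or_iff_not_imp_left, ne_of_gt, ne_of_lt, *]
  · obtain ⟨e, he, het⟩ := ht
    exact insert_subset (het ▸ (hS e he).2)
      (hA.trans ((erase_subset _ _).trans (erase_subset _ _)))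

theorem adjI_iff {I J : ℝ × ℝ} (hI : I.1 < I.2) (hJ : J.1 < J.2) :
    AdjI I J ↔ I.2 = J.1 ∨ J.2 = I.1 := by
  simp only [AdjI, Set.Icc_inter_Icc, Set.Icc_eq_singleton_iff, max_def, min_def]
  constructor
  · rintro ⟨x, h1, h2⟩
    split_ifs at h1 h2 <;> first | exact .inl (by linarith) | exact .inr (by linarith)
  · rintro (h | h)
    · exact ⟨I.2, by split_ifs <;> constructor <;> linarith⟩
    · exact ⟨J.2, by split_ifs <;> constructor <;> linarith⟩

theorem not_adjI_of_mem_dicut {γ : Multiset (ℝ × ℝ)} (hpos : ∀ I ∈ γ, I.1 < I.2) {A : Finset ℝ}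
    {p q : ℝ × ℝ} (hp : p ∈ dicut γ A) (hq : q ∈ dicut γ A) : ¬ AdjI p q := by
  obtain ⟨hpγ, hp2, hp1⟩ := Multiset.mem_filter.1 hp
  obtain ⟨hqγ, hq2, hq1⟩ := Multiset.mem_filter.1 hq
  rw [adjI_iff (hpos p hpγ) (hpos q hqγ)]
  rintro (h | h)
  · exact hq1 (h ▸ hp2)
  · exact hp1 (h ▸ hq2)

theorem card_le_card_dicut_of_pairwise_not_adjI {γ t : Multiset (ℝ × ℝ)}
    (hpos : ∀ I ∈ γ, I.1 < I.2) (ht : t ≤ γ) (hind : ∀ p ∈ t, ∀ q ∈ t, ¬ AdjI p q) :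
    Multiset.card t ≤ Multiset.card (dicut γ (t.map Prod.snd).toFinset) := by
  have hcut : dicut t (t.map Prod.snd).toFinset = t := by
    refine Multiset.filter_eq_self.2 fun I hI =>
      ⟨Multiset.mem_toFinset.2 (Multiset.mem_map_of_mem _ hI), ?_⟩
    simp only [Multiset.mem_toFinset, Multiset.mem_map, not_exists, not_and]
    intro J hJ hJI
    exact hind J hJ I hI ((adjI_iff (hpos J (Multiset.mem_of_le ht hJ))
      (hpos I (Multiset.mem_of_le ht hI))).2 (.inl hJI))
  calc Multiset.card t = Multiset.card (dicut t (t.map Prod.snd).toFinset) := by rw [hcut]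
    _ ≤ _ := Multiset.card_le_card (Multiset.filter_le_filter _ ht)

/-- If γ is a combination of closed intervals of positive length with α(γ) > 1, then
|γ| ≤ 4α(γ) − 3, expressed via an independent sub-multiset of maximal size. -/
theorem stmt_14 (γ : Multiset (ℝ × ℝ)) (hpos : ∀ I ∈ γ, I.1 < I.2)
    (halpha : ∃ t ≤ γ, (∀ p ∈ t, ∀ q ∈ t, ¬ AdjI p q) ∧ 2 ≤ Multiset.card t) :
    ∃ t ≤ γ, (∀ p ∈ t, ∀ q ∈ t, ¬ AdjI p q) ∧
      Multiset.card γ ≤ 4 * Multiset.card t - 3 := by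
  obtain ⟨t₀, ht₀, hind, ht₀card⟩ := halpha
  set S := (γ.map Prod.fst).toFinset ∪ (γ.map Prod.snd).toFinset
  have hS : ∀ I ∈ γ, I.1 ∈ S ∧ I.2 ∈ S := fun I hI =>
    ⟨mem_union_left _ (Multiset.mem_toFinset.2 (Multiset.mem_map_of_mem _ hI)),
      mem_union_right _ (Multiset.mem_toFinset.2 (Multiset.mem_map_of_mem _ hI))⟩
  obtain ⟨A, -, hA⟩ :=
    exists_max_image S.powerset (fun A => Multiset.card (dicut γ A)) ⟨∅, empty_mem_powerset S⟩
  have hmax : ∀ B ⊆ S, Multiset.card (dicut γ B) ≤ Multiset.card (dicut γ A) :=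
    fun B hB => hA B (mem_powerset.2 hB)
  have hheads : (t₀.map Prod.snd).toFinset ⊆ S := fun x hx => by
    obtain ⟨I, hI, rfl⟩ := Multiset.mem_map.1 (Multiset.mem_toFinset.1 hx)
    exact (hS I (Multiset.mem_of_le ht₀ hI)).2
  have hα := (card_le_card_dicut_of_pairwise_not_adjI hpos ht₀ hind).trans (hmax _ hheads)
  have := card_add_three_le_four_mul_of_lt hpos hS hmax (by omega)
  exact ⟨dicut γ A, Multiset.filter_le _ _, fun p hp q hq => not_adjI_of_mem_dicut hpos hp hq,
    by omega⟩
end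

section
/- For every n ≥ 2, the maximum cardinality b_n of a family of pairwise adjacent n-boxes satisfies b_n ≤ 4·b_{n−1} − 3. -/
def AdjBox {n : ℕ} (I J : Fin n → ℝ × ℝ) : Prop := ∃ i, AdjI (I i) (J i)

/-!
Let `S` be a nearly neighbourly family of `n`-boxes and let `[a e, b e]` be the last side of
the box `e`. Call a point a junction if it is the right end of one box and the left end of
another. A set `P` of junctions decides, at each junction, whether boxes may end there
(`x ∈ P`) or start there (`x ∉ P`); the boxes compatible with this choice are pairwise
non-adjacent in the last coordinate, so forgetting it embeds them as a nearly neighbourly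
family of `(n-1)`-boxes, of size at most `m`. A box with `f` non-junction ends is compatible
with a fraction `2^f / 4` of all choices, so averaging gives `∑ 2^f ≤ 4m`, and `2^f ≥ 1 + f`
turns this into `|S| + ∑ f ≤ 4m`. The box with the largest right end and the one with the
smallest left end each have a non-junction end, giving `|S| ≤ 4m - 2`. For the last unit:
either at least `m ≥ 2` boxes have a non-junction right end, or the choice `P = ∅`, which keeps
exactly those boxes, keeps fewer than `m` and makes the average strict.
-/

open Finset

lemma card_filter_powerset_imp_mem_imp_notMem {γ : Type*} [DecidableEq γ] (J : Finset γ)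
    {x y : γ} (hxy : x ≠ y) :
    #{P ∈ J.powerset | (x ∈ J → x ∈ P) ∧ (y ∈ J → y ∉ P)} * 4 =
      2 ^ #J * 2 ^ ((if x ∈ J then 0 else 1) + (if y ∈ J then 0 else 1)) := by
  have hsub : J ∩ {x} ⊆ J \ {y} := fun z hz => by grind
  have hIcc : {P ∈ J.powerset | (x ∈ J → x ∈ P) ∧ (y ∈ J → y ∉ P)} =
      Icc (J ∩ {x}) (J \ {y}) := by
    ext P
    simp only [mem_filter, mem_powerset, mem_Icc, subset_iff, mem_inter, mem_sdiff,
      mem_singleton]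
    grind
  have hsingle (z : γ) : #(J ∩ {z}) = if z ∈ J then 1 else 0 := by
    split_ifs with h <;> simp [h]
  have hy := card_sdiff_add_card_inter J {y}
  have hx := card_le_card hsub
  rw [hIcc, card_Icc_finset hsub, ← pow_add, show (4 : ℕ) = 2 ^ 2 by rfl, ← pow_add]
  congr 1
  rw [hsingle] at hx hy ⊢
  split_ifs at hx hy ⊢ <;> omega

section Junctions

variable {α β : Type*} [DecidableEq β] (S : Finset α) (a b : α → β)

def junctions : Finset β := S.image b ∩ S.image a

def survivors (P : Finset β) : Finset α :=
  {e ∈ S | (b e ∈ junctions S a b → b e ∈ P) ∧ (a e ∈ junctions S a b → a e ∉ P)}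

def freeEnds (e : α) : ℕ :=
  (if b e ∈ junctions S a b then 0 else 1) + (if a e ∈ junctions S a b then 0 else 1)

variable {S a b}

lemma head_ne_tail_of_mem_survivors {P : Finset β} {e f : α} (he : e ∈ survivors S a b P)
    (hf : f ∈ survivors S a b P) : b e ≠ a f := by
  intro h
  simp only [survivors, mem_filter] at he hf
  have hJ : b e ∈ junctions S a b :=
    mem_inter.2 ⟨mem_image_of_mem b he.1, h ▸ mem_image_of_mem a hf.1⟩
  exact hf.2.2 (h ▸ hJ) (h ▸ he.2.1 hJ)

lemma survivors_empty : survivors S a b ∅ = {e ∈ S | b e ∉ junctions S a b} := by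
  ext e
  simp [survivors]

lemma survivors_junctions :
    survivors S a b (junctions S a b) = {e ∈ S | a e ∉ junctions S a b} := by
  ext e
  simp [survivors]

lemma sum_freeEnds :
    ∑ e ∈ S, freeEnds S a b e =
      #(survivors S a b ∅) + #(survivors S a b (junctions S a b)) := by
  rw [survivors_empty, survivors_junctions, card_filter, card_filter, ← sum_add_distrib]
  refine sum_congr rfl fun e _ => ?_
  simp only [freeEnds, ite_not]

lemma sum_card_survivors (hab : ∀ e ∈ S, a e ≠ b e) :
    (∑ P ∈ (junctions S a b).powerset, #(survivors S a b P)) * 4 =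
      2 ^ #(junctions S a b) * ∑ e ∈ S, 2 ^ freeEnds S a b e := by
  simp only [survivors, card_filter, sum_mul, mul_sum]
  rw [sum_comm]
  refine sum_congr rfl fun e he => ?_
  rw [← sum_mul, ← card_filter]
  exact card_filter_powerset_imp_mem_imp_notMem _ (hab e he).symm

lemma sum_two_pow_freeEnds_le {m : ℕ} (hab : ∀ e ∈ S, a e ≠ b e)
    (hsurv : ∀ P, #(survivors S a b P) ≤ m) : ∑ e ∈ S, 2 ^ freeEnds S a b e ≤ 4 * m := by
  have hsum : ∑ P ∈ (junctions S a b).powerset, #(survivors S a b P) ≤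
      2 ^ #(junctions S a b) * m := by
    simpa using sum_le_sum fun P (_ : P ∈ (junctions S a b).powerset) => hsurv P
  refine le_of_mul_le_mul_left ?_ (pow_pos two_pos #(junctions S a b))
  rw [← sum_card_survivors hab]
  linarith

lemma sum_two_pow_freeEnds_lt {m : ℕ} (hab : ∀ e ∈ S, a e ≠ b e)
    (hsurv : ∀ P, #(survivors S a b P) ≤ m) (hempty : #(survivors S a b ∅) < m) :
    ∑ e ∈ S, 2 ^ freeEnds S a b e < 4 * m := by
  have hsum : ∑ P ∈ (junctions S a b).powerset, #(survivors S a b P) <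
      2 ^ #(junctions S a b) * m := by
    simpa using sum_lt_sum (fun P (_ : P ∈ (junctions S a b).powerset) => hsurv P)
      ⟨∅, empty_mem_powerset _, hempty⟩
  refine lt_of_mul_lt_mul_left (a := 2 ^ #(junctions S a b)) ?_ (Nat.zero_le _)
  rw [← sum_card_survivors hab]
  linarith

end Junctions

section Intervals

variable {α β : Type*} [LinearOrder β] {S : Finset α} {a b : α → β}

lemma survivors_empty_nonempty (hab : ∀ e ∈ S, a e < b e) (hS : S.Nonempty) :
    (survivors S a b ∅).Nonempty := by
  obtain ⟨e, he, hmax⟩ := S.exists_max_image b hS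
  refine ⟨e, ?_⟩
  rw [survivors_empty]
  refine mem_filter.2 ⟨he, fun hJ => ?_⟩
  obtain ⟨f, hf, hfe⟩ := mem_image.1 (mem_inter.1 hJ).2
  exact (hab f hf).not_ge (hfe ▸ hmax f hf)

lemma survivors_junctions_nonempty (hab : ∀ e ∈ S, a e < b e) (hS : S.Nonempty) :
    (survivors S a b (junctions S a b)).Nonempty := by
  obtain ⟨e, he, hmin⟩ := S.exists_min_image a hS
  refine ⟨e, ?_⟩
  rw [survivors_junctions]
  refine mem_filter.2 ⟨he, fun hJ => ?_⟩
  obtain ⟨f, hf, hfe⟩ := mem_image.1 (mem_inter.1 hJ).1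
  exact (hab f hf).not_ge (hfe ▸ hmin f hf)

theorem card_le_four_mul_sub_three {m : ℕ} (hab : ∀ e ∈ S, a e < b e) (hm : 2 ≤ m)
    (hfree : ∀ T ⊆ S, (∀ e ∈ T, ∀ f ∈ T, b e ≠ a f) → #T ≤ m) : #S ≤ 4 * m - 3 := by
  rcases S.eq_empty_or_nonempty with rfl | hS
  · simp
  have hne : ∀ e ∈ S, a e ≠ b e := fun e he => (hab e he).ne
  have hsurv (P : Finset β) : #(survivors S a b P) ≤ m :=
    hfree _ (filter_subset _ _) fun e he f hf => head_ne_tail_of_mem_survivors he hf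
  have hhead := (survivors_empty_nonempty hab hS).card_pos
  have htail := (survivors_junctions_nonempty hab hS).card_pos
  have hlow : #S + (#(survivors S a b ∅) + #(survivors S a b (junctions S a b))) ≤
      ∑ e ∈ S, 2 ^ freeEnds S a b e := by
    rw [← sum_freeEnds, card_eq_sum_ones, ← sum_add_distrib]
    exact sum_le_sum fun e _ => by rw [add_comm]; exact Nat.lt_two_pow_self
  by_cases hempty : #(survivors S a b ∅) < m
  · have := sum_two_pow_freeEnds_lt hne hsurv hempty
    omega
  · have := sum_two_pow_freeEnds_le hne hsurv
    omega

end Intervals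

lemma adjI_iff_s15 {p q : ℝ × ℝ} (hp : p.1 < p.2) (hq : q.1 < q.2) :
    AdjI p q ↔ p.2 = q.1 ∨ q.2 = p.1 := by
  simp only [AdjI, Set.Icc_inter_Icc, Set.Icc_eq_singleton_iff, exists_eq_left']
  grind

lemma not_adjI_self {p : ℝ × ℝ} (hp : p.1 < p.2) : ¬AdjI p p := by
  rw [adjI_iff_s15 hp hp]
  rintro (h | h) <;> linarith

theorem two_le_of_forall_card_le {k m : ℕ} (hk : k ≠ 0)
    (hb : ∀ S : Finset (Fin k → ℝ × ℝ), (∀ I ∈ S, ∀ i, (I i).1 < (I i).2) →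
      (∀ I ∈ S, ∀ J ∈ S, I ≠ J → AdjBox I J) → #S ≤ m) : 2 ≤ m := by
  let i₀ : Fin k := ⟨0, Nat.pos_of_ne_zero hk⟩
  let I : Fin k → ℝ × ℝ := fun _ => (0, 1)
  let J : Fin k → ℝ × ℝ := fun _ => (1, 2)
  have hIJ : I ≠ J := fun h => by simpa [I, J] using congrFun h i₀
  have hproper : ∀ K ∈ ({I, J} : Finset _), ∀ i, (K i).1 < (K i).2 := by
    simp [I, J]
  have hadj : (({I, J} : Finset _) : Set (Fin k → ℝ × ℝ)).Pairwise AdjBox := by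
    rw [coe_pair, Set.pairwise_pair]
    refine fun _ => ⟨⟨i₀, (adjI_iff_s15 ?_ ?_).2 ?_⟩, ⟨i₀, (adjI_iff_s15 ?_ ?_).2 ?_⟩⟩ <;>
      norm_num [I, J]
  simpa [card_pair hIJ] using hb _ hproper hadj

theorem card_le_of_forall_head_ne_tail_last {k m : ℕ}
    (hb : ∀ S : Finset (Fin k → ℝ × ℝ), (∀ I ∈ S, ∀ i, (I i).1 < (I i).2) →
      (∀ I ∈ S, ∀ J ∈ S, I ≠ J → AdjBox I J) → #S ≤ m)
    {T : Finset (Fin (k + 1) → ℝ × ℝ)} (hproper : ∀ I ∈ T, ∀ i, (I i).1 < (I i).2)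
    (hadj : (T : Set (Fin (k + 1) → ℝ × ℝ)).Pairwise AdjBox)
    (hlast : ∀ I ∈ T, ∀ J ∈ T, (I (Fin.last k)).2 ≠ (J (Fin.last k)).1) : #T ≤ m := by
  have hinit : ∀ I ∈ T, ∀ J ∈ T, I ≠ J → AdjBox (Fin.init I) (Fin.init J) := by
    intro I hI J hJ hIJ
    obtain ⟨i, hi⟩ := hadj hI hJ hIJ
    induction i using Fin.lastCases with
    | last =>
      rcases (adjI_iff_s15 (hproper I hI _) (hproper J hJ _)).1 hi with h | h
      · exact absurd h (hlast I hI J hJ)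
      · exact absurd h (hlast J hJ I hI)
    | cast j => exact ⟨j, hi⟩
  have hinj : Set.InjOn Fin.init (T : Set (Fin (k + 1) → ℝ × ℝ)) := by
    intro I hI J hJ h
    by_contra hIJ
    obtain ⟨j, hj⟩ := hinit I hI J hJ hIJ
    rw [h] at hj
    exact not_adjI_self (hproper J hJ _) hj
  rw [← card_image_of_injOn hinj]
  refine hb _ ?_ ?_
  · simp only [mem_image]
    rintro _ ⟨I, hI, rfl⟩ j
    exact hproper I hI _
  · simp only [mem_image]
    rintro _ ⟨I, hI, rfl⟩ _ ⟨J, hJ, rfl⟩ hIJ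
    exact hinit I hI J hJ (ne_of_apply_ne _ hIJ)

/-- b_n ≤ 4·b_{n−1} − 3 for n ≥ 2: if every nearly neighbourly family of (n−1)-boxes
has at most m elements, then every nearly neighbourly family of n-boxes has at most
4m − 3 elements. -/
theorem stmt_15 (n : ℕ) (hn : 2 ≤ n) (m : ℕ)
    (hb : ∀ S : Finset (Fin (n - 1) → ℝ × ℝ),
      (∀ I ∈ S, ∀ i, (I i).1 < (I i).2) →
      (∀ I ∈ S, ∀ J ∈ S, I ≠ J → AdjBox I J) → S.card ≤ m) :
    ∀ S : Finset (Fin n → ℝ × ℝ),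
      (∀ I ∈ S, ∀ i, (I i).1 < (I i).2) →
      (∀ I ∈ S, ∀ J ∈ S, I ≠ J → AdjBox I J) → S.card ≤ 4 * m - 3 := by
  obtain ⟨k, rfl⟩ : ∃ k, n = k + 1 := ⟨n - 1, by omega⟩
  rw [Nat.add_sub_cancel] at hb
  intro S hproper hadj
  refine card_le_four_mul_sub_three (a := fun I => (I (Fin.last k)).1)
    (b := fun I => (I (Fin.last k)).2) (fun I hI => hproper I hI _)
    (two_le_of_forall_card_le (by omega) hb) fun T hTS hT => ?_
  exact card_le_of_forall_head_ne_tail_last hb (fun I hI => hproper I (hTS hI))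
    (Set.Pairwise.mono (coe_subset.2 hTS) hadj) hT
end
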